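/- Let G = {(g_i, 𝔤_i) : 1 ≤ i ≤ l} be nonzero pseudo-polynomials over a Dedekind domain R. A nonzero pseudo-polynomial (f, 𝔣) is minimal with respect to G (i.e., cannot be reduced modulo G) if and only if its leading term module 𝔣[x]·LT(f) is not contained in the leading term ideal Lt(G) = Σ_i 𝔤_i[x]·LT(g_i). -/

import Mathlib

open MvPolynomial

attribute [local instance] MvPolynomial.algebraMvPolynomial

noncomputable def mdeg {σ : Type*} (m : MonomialOrder σ) {K : Type*} [CommSemiring K]
    (f : MvPolynomial σ K) : σ →₀ ℕ :=
  m.toSyn.symm (f.support.sup fun d => m.toSyn d)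

noncomputable def plc {σ : Type*} (m : MonomialOrder σ) {K : Type*} [CommSemiring K]
    (f : MvPolynomial σ K) : K :=
  f.coeff (mdeg m f)

open Classical in
/-- `(f, 𝔣)` can be reduced modulo the family `(gᵢ, 𝔤ᵢ)`:
`𝔣·LC(f) ⊆ ∑_{i ∈ J} 𝔤ᵢ·LC(gᵢ)` where `J = {i : LM(gᵢ) ∣ LM(f)}`. -/
noncomputable def Reducible {R : Type*} [CommRing R] [IsDomain R] [IsDedekindDomain R]
    {n l : ℕ} (m : MonomialOrder (Fin n))
    (g : Fin l → MvPolynomial (Fin n) (FractionRing R))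
    (𝔤 : Fin l → FractionalIdeal (nonZeroDivisors R) (FractionRing R))
    (𝔣 : FractionalIdeal (nonZeroDivisors R) (FractionRing R))
    (f : MvPolynomial (Fin n) (FractionRing R)) : Prop :=
  𝔣 * FractionalIdeal.spanSingleton (nonZeroDivisors R) (plc m f) ≤
    ∑ i ∈ Finset.univ.filter (fun i => ∃ γ, mdeg m f = mdeg m (g i) + γ),
      𝔤 i * FractionalIdeal.spanSingleton (nonZeroDivisors R) (plc m (g i))

/-!
The `R[x]`-span of the terms `c • LT(gᵢ)`, `c ∈ 𝔤ᵢ`, is a monomial module: a polynomial lies in it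
exactly when its coefficient at every `x^d` lies in `∑_{LM(gᵢ) ∣ x^d} 𝔤ᵢ LC(gᵢ)`, since multiplying
by `x^γ` only moves coefficients to larger monomials. Applied to the terms `h · LT(f)` with
coefficients of `h` in `𝔣`, the condition collapses to the single coefficient at `LM(f)`, which is
reducibility.
-/

namespace MvPolynomial

variable {σ ι R K : Type*} [CommRing R] [CommRing K] [Algebra R K]

theorem monomial_mem_span_iUnion_image_monomial {e : ι → σ →₀ ℕ} {𝔞 : ι → Submodule R K}
    {d : σ →₀ ℕ} {c : K} (hc : c ∈ ⨆ (i) (_ : e i ≤ d), 𝔞 i) :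
    monomial d c ∈ Submodule.span (MvPolynomial σ R) (⋃ i, monomial (e i) '' (𝔞 i : Set K)) := by
  set M := Submodule.span (MvPolynomial σ R) (⋃ i, monomial (e i) '' (𝔞 i : Set K))
  suffices h : ⨆ (i) (_ : e i ≤ d), 𝔞 i ≤
      (M.restrictScalars R).comap ((monomial d).restrictScalars R) from h hc
  refine iSup₂_le fun i hi a ha => ?_
  have hfactor : monomial d a = monomial (d - e i) (1 : R) • monomial (e i) a := by
    rw [Algebra.smul_def, algebraMap_def, map_monomial, map_one, monomial_mul, one_mul,
      tsub_add_cancel_of_le hi]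
  change monomial d a ∈ M
  rw [hfactor]
  exact M.smul_mem _ (Submodule.subset_span (Set.mem_iUnion.mpr ⟨i, a, ha, rfl⟩))

theorem coeff_mem_of_mem_span_iUnion_image_monomial {e : ι → σ →₀ ℕ} {𝔞 : ι → Submodule R K}
    {x : MvPolynomial σ K}
    (hx : x ∈ Submodule.span (MvPolynomial σ R) (⋃ i, monomial (e i) '' (𝔞 i : Set K)))
    (d : σ →₀ ℕ) : x.coeff d ∈ ⨆ (i) (_ : e i ≤ d), 𝔞 i := by
  classical
  induction hx using Submodule.span_induction generalizing d with
  | mem x hx =>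
    obtain ⟨i, a, ha, rfl⟩ := Set.mem_iUnion.mp hx
    rw [coeff_monomial]
    split_ifs with hid
    · exact Submodule.mem_iSup_of_mem i (Submodule.mem_iSup_of_mem hid.le ha)
    · exact zero_mem _
  | zero => rw [coeff_zero]; exact zero_mem _
  | add x y _ _ hx hy => rw [coeff_add]; exact add_mem (hx d) (hy d)
  | smul p x _ hx =>
    rw [Algebra.smul_def, algebraMap_def, coeff_mul]
    refine Submodule.sum_mem _ fun q hq => ?_
    rw [Finset.HasAntidiagonal.mem_antidiagonal] at hq
    rw [coeff_map, ← Algebra.smul_def]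
    have hmono : ⨆ (i) (_ : e i ≤ q.2), 𝔞 i ≤ ⨆ (i) (_ : e i ≤ d), 𝔞 i :=
      biSup_mono fun i hi => hi.trans (hq ▸ le_add_self)
    exact Submodule.smul_mem _ _ (hmono (hx q.2))

theorem mem_span_iUnion_image_monomial_iff {e : ι → σ →₀ ℕ} {𝔞 : ι → Submodule R K}
    {x : MvPolynomial σ K} :
    x ∈ Submodule.span (MvPolynomial σ R) (⋃ i, monomial (e i) '' (𝔞 i : Set K)) ↔
      ∀ d, x.coeff d ∈ ⨆ (i) (_ : e i ≤ d), 𝔞 i := by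
  refine ⟨coeff_mem_of_mem_span_iUnion_image_monomial, fun h => ?_⟩
  rw [x.as_sum]
  exact Submodule.sum_mem _ fun d _ => monomial_mem_span_iUnion_image_monomial (h d)

theorem setOf_mul_monomial_subset_span_iff {e : ι → σ →₀ ℕ} {𝔞 : ι → Submodule R K}
    (𝔟 : Submodule R K) (d₀ : σ →₀ ℕ) (c₀ : K) :
    {x : MvPolynomial σ K | ∃ h, (∀ d, h.coeff d ∈ 𝔟) ∧ x = h * monomial d₀ c₀} ⊆
        Submodule.span (MvPolynomial σ R) (⋃ i, monomial (e i) '' (𝔞 i : Set K)) ↔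
      ∀ a ∈ 𝔟, a * c₀ ∈ ⨆ (i) (_ : e i ≤ d₀), 𝔞 i := by
  classical
  simp_rw [Set.subset_def, SetLike.mem_coe, mem_span_iUnion_image_monomial_iff]
  constructor
  · intro h a ha
    have hCa : ∀ d, (C a : MvPolynomial σ K).coeff d ∈ 𝔟 := fun d => by
      rw [coeff_C]; split_ifs
      exacts [ha, zero_mem _]
    simpa [C_mul_monomial] using h _ ⟨C a, hCa, rfl⟩ d₀
  · rintro h _ ⟨p, hp, rfl⟩ d
    rw [coeff_mul_monomial']
    split_ifs with hd
    · have hmono : ⨆ (i) (_ : e i ≤ d₀), 𝔞 i ≤ ⨆ (i) (_ : e i ≤ d), 𝔞 i :=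
        biSup_mono fun i hi => hi.trans hd
      exact hmono (h _ (hp _))
    · exact zero_mem _

end MvPolynomial

theorem FractionalIdeal.coe_finset_sum {R P ι : Type*} [CommRing R] [CommRing P] [Algebra R P]
    {S : Submonoid R} (s : Finset ι) (I : ι → FractionalIdeal S P) :
    ((∑ i ∈ s, I i : FractionalIdeal S P) : Submodule R P) = ⨆ i ∈ s, (I i : Submodule R P) := by
  rw [← Finset.sup_eq_iSup, ← FractionalIdeal.coeSubmoduleHom_apply, map_sum]
  rfl

theorem reducible_iff_forall_mul_plc_mem {R : Type*} [CommRing R] [IsDomain R]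
    [IsDedekindDomain R] {n l : ℕ} (m : MonomialOrder (Fin n))
    (g : Fin l → MvPolynomial (Fin n) (FractionRing R))
    (𝔤 : Fin l → FractionalIdeal (nonZeroDivisors R) (FractionRing R))
    (𝔣 : FractionalIdeal (nonZeroDivisors R) (FractionRing R))
    (f : MvPolynomial (Fin n) (FractionRing R)) :
    Reducible m g 𝔤 𝔣 f ↔ ∀ a ∈ (𝔣 : Submodule R (FractionRing R)),
      a * plc m f ∈ ⨆ (i) (_ : mdeg m (g i) ≤ mdeg m f),
        (𝔤 i : Submodule R (FractionRing R)) * Submodule.span R {plc m (g i)} := by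
  rw [Reducible, ← FractionalIdeal.coe_le_coe, FractionalIdeal.coe_finset_sum]
  simp only [FractionalIdeal.coe_mul, FractionalIdeal.coe_spanSingleton, SetLike.le_def,
    Submodule.mem_mul_span_singleton, Finset.mem_filter, Finset.mem_univ, true_and,
    ← le_iff_exists_add, forall_exists_index, and_imp, forall_apply_eq_imp_iff₂]

theorem stmt9_general {R : Type*} [CommRing R] [IsDomain R] [IsDedekindDomain R] {n l : ℕ}
    (m : MonomialOrder (Fin n))
    (f : MvPolynomial (Fin n) (FractionRing R))
    (𝔣 : FractionalIdeal (nonZeroDivisors R) (FractionRing R))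
    (g : Fin l → MvPolynomial (Fin n) (FractionRing R))
    (𝔤 : Fin l → FractionalIdeal (nonZeroDivisors R) (FractionRing R)) :
    ¬ Reducible m g 𝔤 𝔣 f ↔
      ¬ ({x : MvPolynomial (Fin n) (FractionRing R) |
            ∃ h, (∀ d, h.coeff d ∈ 𝔣) ∧ x = h * monomial (mdeg m f) (plc m f)} ⊆
          (Submodule.span (MvPolynomial (Fin n) R)
            (⋃ i, {x : MvPolynomial (Fin n) (FractionRing R) |
              ∃ c ∈ 𝔤 i, x = C c * monomial (mdeg m (g i)) (plc m (g i))}) :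
            Set (MvPolynomial (Fin n) (FractionRing R)))) := by
  have hgens : ∀ i, {x : MvPolynomial (Fin n) (FractionRing R) |
      ∃ c ∈ 𝔤 i, x = C c * monomial (mdeg m (g i)) (plc m (g i))} =
        monomial (mdeg m (g i)) ''
          ((𝔤 i : Submodule R (FractionRing R)) * Submodule.span R {plc m (g i)} : Set _) := by
    intro i
    ext x
    simp only [Set.mem_ofPred_eq, Set.mem_image, SetLike.mem_coe, Submodule.mem_mul_span_singleton,
      FractionalIdeal.mem_coe, C_mul_monomial, exists_exists_and_eq_and]
    simp only [eq_comm]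
  simp_rw [hgens]
  exact not_congr ((reducible_iff_forall_mul_plc_mem m g 𝔤 𝔣 f).trans
    (MvPolynomial.setOf_mul_monomial_subset_span_iff (𝔣 : Submodule R (FractionRing R)) _ _).symm)

/-- Let `G = {(gᵢ, 𝔤ᵢ)}` be nonzero pseudo-polynomials over a Dedekind
domain. A nonzero pseudo-polynomial `(f, 𝔣)` is minimal w.r.t. `G` (cannot be
reduced modulo `G`) iff its leading term module `𝔣[x]·LT(f)` is not contained in
the leading term ideal `Lt(G) = ∑ᵢ 𝔤ᵢ[x]·LT(gᵢ)`. -/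
theorem stmt9 {R : Type*} [CommRing R] [IsDomain R] [IsDedekindDomain R] {n l : ℕ}
    (m : MonomialOrder (Fin n))
    (f : MvPolynomial (Fin n) (FractionRing R))
    (𝔣 : FractionalIdeal (nonZeroDivisors R) (FractionRing R))
    (hf : f ≠ 0) (h𝔣 : 𝔣 ≠ 0)
    (hpf : ∀ c ∈ 𝔣, ∀ d, c * f.coeff d ∈
      (1 : FractionalIdeal (nonZeroDivisors R) (FractionRing R)))
    (g : Fin l → MvPolynomial (Fin n) (FractionRing R))
    (𝔤 : Fin l → FractionalIdeal (nonZeroDivisors R) (FractionRing R))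
    (hg : ∀ i, g i ≠ 0) (h𝔤 : ∀ i, 𝔤 i ≠ 0)
    (hpg : ∀ i, ∀ c ∈ 𝔤 i, ∀ d, c * (g i).coeff d ∈
      (1 : FractionalIdeal (nonZeroDivisors R) (FractionRing R))) :
    ¬ Reducible m g 𝔤 𝔣 f ↔
      ¬ ({x : MvPolynomial (Fin n) (FractionRing R) |
            ∃ h, (∀ d, h.coeff d ∈ 𝔣) ∧ x = h * monomial (mdeg m f) (plc m f)} ⊆
          (Submodule.span (MvPolynomial (Fin n) R)
            (⋃ i, {x : MvPolynomial (Fin n) (FractionRing R) |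
              ∃ c ∈ 𝔤 i, x = C c * monomial (mdeg m (g i)) (plc m (g i))}) :
            Set (MvPolynomial (Fin n) (FractionRing R)))) :=
  stmt9_general m f 𝔣 g 𝔤
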